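/- arXiv:2106.14086 — 2 statements merged into one kernel-verified Lean document; each statement's English description precedes it below -/
import Mathlib

section
/- For a strongly connected weighted directed graph with positive arc weights, the row vector α defined by letting α_i be the sum over all inward directed spanning trees rooted at vertex i of the product of their arc weights, satisfies α·L = 0, where L is the directed Laplacian; moreover each α_i > 0. -/
open Finset

/-- The directed Laplacian of a weighted directed multigraph. -/
def lap {n : ℕ} {D : Type*} [Fintype D]
    (tail head : D → Fin n) (w : D → ℝ) : Matrix (Fin n) (Fin n) ℝ :=
  fun i j =>
    (if i = j then ∑ d ∈ univ.filter (fun d => tail d = i), w d else 0)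
      - ∑ d ∈ univ.filter (fun d => tail d = i ∧ head d = j), w d

/-- One step along an arc of `T` from `x` to `y`. -/
def treeStep {n : ℕ} {D : Type*} (tail head : D → Fin n) (T : Finset D)
    (x y : Fin n) : Prop :=
  ∃ d ∈ T, tail d = x ∧ head d = y

/-- `T` is an inward directed spanning tree rooted at `i`: every vertex other than the
root has exactly one outgoing arc in `T`, the root has none, and every vertex reaches
the root along arcs of `T` (this last condition rules out directed cycles). -/
def IsInwardTree {n : ℕ} {D : Type*} [Fintype D] (tail head : D → Fin n)
    (i : Fin n) (T : Finset D) : Prop :=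
  (∀ v, v ≠ i → (T.filter (fun d => tail d = v)).card = 1) ∧
  (T.filter (fun d => tail d = i)).card = 0 ∧
  (∀ v, Relation.ReflTransGen (treeStep tail head T) v i)

open scoped Classical in
/-- `treeWeightSum tail head w i` = sum over all inward directed spanning trees rooted at
`i` of the product of their arc weights. -/
noncomputable def treeWeightSum {n : ℕ} {D : Type*} [Fintype D]
    (tail head : D → Fin n) (w : D → ℝ) (i : Fin n) : ℝ :=
  ∑ T : Finset D, if IsInwardTree tail head i T then ∏ d ∈ T, w d else 0


/-!
Write `α` for `treeWeightSum`. Both `α j * (weight of the arcs out of j)` and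
`∑ (d : _ → j), α (tail d) * w d` are the total weight of the arc sets in which every vertex has
exactly one outgoing arc and reaches `j`, i.e. of the functional graphs whose unique cycle
passes through `j`: deleting the arc out of `j`, respectively the cycle arc entering `j`, leaves
an inward tree, and each pair (tree, arc) arises from exactly one such graph. These two sums are
the diagonal and the off-diagonal part of `(α L) j`. Positivity: shortest paths to the root
form an inward tree.
-/

section Iterate

variable {α : Type*} {r : α → α → Prop} {g : α → α} {i j : α}

theorem Relation.ReflTransGen.exists_iterate_eq (hg : ∀ x y, r x y → y = g x) {v u : α}
    (h : Relation.ReflTransGen r v u) : ∃ m, g^[m] v = u := by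
  induction h with
  | refl => exact ⟨0, rfl⟩
  | tail _ hbc ih =>
    obtain ⟨m, hm⟩ := ih
    exact ⟨m + 1, by rw [Function.iterate_succ_apply', hm, ← hg _ _ hbc]⟩

theorem Relation.reflTransGen_of_iterate_eq (hg : ∀ x, x ≠ i → r x (g x)) :
    ∀ (m : ℕ) (v : α), g^[m] v = i → Relation.ReflTransGen r v i
  | 0, _, hv => hv ▸ .refl
  | m + 1, v, hv => by
    by_cases hvi : v = i
    · exact hvi ▸ .refl
    · exact .head (hg v hvi) (reflTransGen_of_iterate_eq hg m (g v) hv)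

def Relation.ReachesIn (r : α → α → Prop) (i : α) : ℕ → α → Prop
  | 0, v => v = i
  | m + 1, v => ∃ u, r v u ∧ Relation.ReachesIn r i m u

/-- `g v` is the next vertex on a shortest path from `v` to `i`. -/
theorem Relation.exists_forall_iterate_eq (h : ∀ v, Relation.ReflTransGen r v i) :
    ∃ g : α → α, (∀ v, v ≠ i → r v (g v)) ∧ ∀ v, ∃ m, g^[m] v = i := by
  classical
  have hlen : ∀ v, ∃ m, ReachesIn r i m v := fun v =>
    Relation.ReflTransGen.head_induction_on (h v) ⟨0, rfl⟩
      fun hvu _ ⟨m, hm⟩ => ⟨m + 1, _, hvu, hm⟩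
  let φ v := Nat.find (hlen v)
  have hstep : ∀ v, v ≠ i → ∃ u, r v u ∧ φ u < φ v := by
    intro v hv
    have hspec : ReachesIn r i (φ v) v := Nat.find_spec (hlen v)
    obtain ⟨m, hm⟩ : ∃ m, φ v = m + 1 :=
      Nat.exists_eq_succ_of_ne_zero fun h0 => hv (by rwa [h0] at hspec)
    rw [hm] at hspec
    obtain ⟨u, hvu, hu⟩ := hspec
    exact ⟨u, hvu, (Nat.find_le hu).trans_lt (hm ▸ m.lt_succ_self)⟩
  choose! g hg using hstep
  refine ⟨g, fun v hv => (hg v hv).1, fun v => ?_⟩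
  induction v using (measure φ).wf.induction with
  | h v ih =>
    by_cases hv : v = i
    · exact ⟨0, hv⟩
    · obtain ⟨m, hm⟩ := ih (g v) (hg v hv).2
      exact ⟨m + 1, hm⟩

theorem Function.exists_apply_eq_of_forall_iterate_eq (hj : ∀ v, ∃ m, g^[m] v = j) :
    ∃ i, g i = j ∧ ∀ v, ∃ m, g^[m] v = i := by
  obtain ⟨p, hp⟩ := hj (g j)
  refine ⟨g^[p] j, by rwa [← Function.iterate_succ_apply' g, Function.iterate_succ_apply], ?_⟩
  intro v
  obtain ⟨k, hk⟩ := hj v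
  exact ⟨p + k, by rw [Function.iterate_add_apply, hk]⟩

/-- A vertex through which every orbit passes lies on a cycle, and `g` is injective there. -/
theorem Function.eq_of_apply_eq_of_forall_iterate_eq (hi : ∀ v, ∃ m, g^[m] v = i)
    (hj : ∀ v, ∃ m, g^[m] v = j) (h : g i = g j) : i = j := by
  obtain ⟨p, hp⟩ := hi (g i)
  obtain ⟨a, ha⟩ := hj i
  calc i = g^[p] (g j) := by rw [← h, hp]
    _ = g^[a] (g^[p + 1] i) := by
      rw [← ha]; exact Function.Commute.iterate_iterate_self g (p + 1) a i
    _ = j := by rw [Function.iterate_succ_apply, hp, ha]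

end Iterate

section Selection

variable {n : ℕ} {D : Type*} {tail head : D → Fin n} {F : Finset D} {σ : Fin n → D}

theorem mem_of_filter_eq_singleton (hσ : ∀ v, F.filter (fun d => tail d = v) = {σ v})
    (v : Fin n) : σ v ∈ F :=
  (mem_filter.mp ((hσ v).ge (mem_singleton_self _))).1

theorem tail_of_filter_eq_singleton (hσ : ∀ v, F.filter (fun d => tail d = v) = {σ v})
    (v : Fin n) : tail (σ v) = v :=
  (mem_filter.mp ((hσ v).ge (mem_singleton_self _))).2

theorem eq_of_filter_eq_singleton (hσ : ∀ v, F.filter (fun d => tail d = v) = {σ v})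
    {d : D} (hd : d ∈ F) : d = σ (tail d) :=
  mem_singleton.mp ((hσ (tail d)).le (mem_filter.mpr ⟨hd, rfl⟩))

theorem head_eq_of_treeStep (hσ : ∀ v, F.filter (fun d => tail d = v) = {σ v})
    {T : Finset D} (hT : T ⊆ F) {x y : Fin n} (h : treeStep tail head T x y) :
    y = head (σ x) := by
  obtain ⟨d, hd, rfl, rfl⟩ := h
  rw [← eq_of_filter_eq_singleton hσ (hT hd)]

variable [Fintype D] [DecidableEq D]

theorem isInwardTree_erase_iff (hσ : ∀ v, F.filter (fun d => tail d = v) = {σ v}) (i : Fin n) :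
    IsInwardTree tail head i (F.erase (σ i)) ↔ ∀ v, ∃ m, (fun v => head (σ v))^[m] v = i := by
  have hinj : Function.Injective σ := fun a b h => by
    rw [← tail_of_filter_eq_singleton hσ a, h, tail_of_filter_eq_singleton hσ b]
  refine ⟨fun hT v => ?_, fun h => ⟨fun v hv => ?_, ?_, fun v => ?_⟩⟩
  · exact (hT.2.2 v).exists_iterate_eq fun _ _ => head_eq_of_treeStep hσ (erase_subset _ _)
  · rw [filter_erase, hσ v, erase_eq_of_notMem (by simpa using hinj.ne hv.symm), card_singleton]
  · rw [filter_erase, hσ i, erase_singleton, card_empty]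
  · obtain ⟨m, hm⟩ := h v
    refine Relation.reflTransGen_of_iterate_eq (fun x hx => ?_) m v hm
    exact ⟨σ x, mem_erase.mpr ⟨hinj.ne hx, mem_of_filter_eq_singleton hσ x⟩,
      tail_of_filter_eq_singleton hσ x, rfl⟩

end Selection

section Unicyclic

variable {n : ℕ} {D : Type*} {tail head : D → Fin n} {i j : Fin n} {F T : Finset D} {d : D}

/-- `F` is a functional graph whose unique cycle passes through `j`. -/
def IsUnicyclicThrough (tail head : D → Fin n) (j : Fin n) (F : Finset D) : Prop :=
  (∀ v, (F.filter (fun d => tail d = v)).card = 1) ∧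
  ∀ v, Relation.ReflTransGen (treeStep tail head F) v j

theorem IsUnicyclicThrough.exists_selection (hF : IsUnicyclicThrough tail head j F) :
    ∃ σ : Fin n → D, (∀ v, F.filter (fun d => tail d = v) = {σ v}) ∧
      ∀ v, ∃ m, (fun v => head (σ v))^[m] v = j := by
  choose σ hσ using fun v => card_eq_one.mp (hF.1 v)
  exact ⟨σ, hσ, fun v => (hF.2 v).exists_iterate_eq fun _ _ => head_eq_of_treeStep hσ subset_rfl⟩

variable [Fintype D]

theorem IsInwardTree.notMem (hT : IsInwardTree tail head i T) (hd : tail d = i) : d ∉ T :=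
  fun hmem => by
    simpa [card_eq_zero.mp hT.2.1] using (mem_filter.mpr ⟨hmem, hd⟩ : d ∈ T.filter (tail · = i))

variable [DecidableEq D]

theorem IsInwardTree.isUnicyclicThrough_insert (hT : IsInwardTree tail head (tail d) T)
    (hreach : Relation.ReflTransGen (treeStep tail head (insert d T)) (tail d) j) :
    IsUnicyclicThrough tail head j (insert d T) := by
  refine ⟨fun v => ?_, fun v => .trans ?_ hreach⟩
  · rw [filter_insert]
    split_ifs with hv
    · rw [← hv, card_eq_zero.mp hT.2.1, insert_empty, card_singleton]
    · exact hT.1 v (Ne.symm hv)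
  · refine Relation.ReflTransGen.mono (fun a b hab => ?_) _ _ (hT.2.2 v)
    obtain ⟨e, he, h⟩ := hab
    exact ⟨e, mem_insert_of_mem he, h⟩

theorem IsUnicyclicThrough.existsUnique_tail_eq (hF : IsUnicyclicThrough tail head j F) :
    ∃! d, d ∈ F ∧ tail d = j ∧ IsInwardTree tail head (tail d) (F.erase d) := by
  obtain ⟨σ, hσ, hreach⟩ := hF.exists_selection
  refine ⟨σ j, ⟨mem_of_filter_eq_singleton hσ j, tail_of_filter_eq_singleton hσ j, ?_⟩,
    fun d ⟨hd, hdj, _⟩ => hdj ▸ eq_of_filter_eq_singleton hσ hd⟩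
  rwa [tail_of_filter_eq_singleton hσ j, isInwardTree_erase_iff hσ]

theorem IsUnicyclicThrough.existsUnique_head_eq (hF : IsUnicyclicThrough tail head j F) :
    ∃! d, d ∈ F ∧ head d = j ∧ IsInwardTree tail head (tail d) (F.erase d) := by
  obtain ⟨σ, hσ, hreach⟩ := hF.exists_selection
  -- `i` is the predecessor of `j` on the cycle
  obtain ⟨i, hij, hi⟩ := Function.exists_apply_eq_of_forall_iterate_eq hreach
  refine ⟨σ i, ⟨mem_of_filter_eq_singleton hσ i, hij, ?_⟩, ?_⟩
  · rwa [tail_of_filter_eq_singleton hσ i, isInwardTree_erase_iff hσ]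
  · rintro d ⟨hd, hdj, hdT⟩
    obtain ⟨v, rfl⟩ : ∃ v, d = σ v := ⟨_, eq_of_filter_eq_singleton hσ hd⟩
    rw [tail_of_filter_eq_singleton hσ v, isInwardTree_erase_iff hσ] at hdT
    rw [Function.eq_of_apply_eq_of_forall_iterate_eq hdT hi (hdj.trans hij.symm)]

end Unicyclic

section TreeSums

variable {n : ℕ} {D : Type*} [Fintype D] {tail head : D → Fin n}

open scoped Classical in
theorem treeWeightSum_eq_sum_filter (w : D → ℝ) (i : Fin n) :
    treeWeightSum tail head w i = ∑ T ∈ univ.filter (IsInwardTree tail head i), ∏ d ∈ T, w d :=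
  (sum_filter _ _).symm

theorem treeWeightSum_pos {w : D → ℝ} (hw : ∀ d, 0 < w d) {i : Fin n} {T : Finset D}
    (hT : IsInwardTree tail head i T) : 0 < treeWeightSum tail head w i := by
  classical
  rw [treeWeightSum_eq_sum_filter]
  exact sum_pos (fun T _ => prod_pos fun d _ => hw d) ⟨T, mem_filter.mpr ⟨mem_univ _, hT⟩⟩

theorem exists_isInwardTree
    (hconn : ∀ x y : Fin n,
      Relation.ReflTransGen (fun a b => ∃ d : D, tail d = a ∧ head d = b) x y)
    (i : Fin n) : ∃ T, IsInwardTree tail head i T := by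
  classical
  obtain ⟨g, hg, hgi⟩ := Relation.exists_forall_iterate_eq fun v => hconn v i
  choose σ hσt hσh using fun v : {v // v ≠ i} => hg v v.2
  have hfilter : ∀ v (hv : v ≠ i), (univ.image σ).filter (tail · = v) = {σ ⟨v, hv⟩} := by
    intro v hv
    ext d
    simp only [mem_filter, mem_image, mem_univ, true_and, mem_singleton]
    constructor
    · rintro ⟨⟨u, rfl⟩, htail⟩
      obtain rfl : u = ⟨v, hv⟩ := Subtype.ext ((hσt u).symm.trans htail)
      rfl
    · rintro rfl
      exact ⟨⟨_, rfl⟩, hσt _⟩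
  refine ⟨univ.image σ, fun v hv => by rw [hfilter v hv, card_singleton], ?_, fun v => ?_⟩
  · rw [card_eq_zero, filter_eq_empty_iff]
    intro d hd htail
    obtain ⟨u, -, rfl⟩ := mem_image.mp hd
    exact u.2 ((hσt u).symm.trans htail)
  · obtain ⟨m, hm⟩ := hgi v
    refine Relation.reflTransGen_of_iterate_eq (fun x hx => ?_) m v hm
    exact ⟨σ ⟨x, hx⟩, mem_image_of_mem _ (mem_univ _), hσt _, hσh _⟩

theorem sum_mul_lap (w : D → ℝ) (x : Fin n → ℝ) (j : Fin n) :
    ∑ i, x i * lap tail head w i j =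
      ∑ d ∈ univ.filter (fun d => tail d = j), x (tail d) * w d -
        ∑ d ∈ univ.filter (fun d => head d = j), x (tail d) * w d := by
  simp only [lap, mul_sub, sum_sub_distrib, mul_ite, mul_zero, sum_ite_eq', mem_univ, if_true,
    mul_sum]
  congr 1
  · exact sum_congr rfl fun d hd => by rw [(mem_filter.mp hd).2]
  · rw [← sum_fiberwise (univ.filter (head · = j)) tail]
    refine sum_congr rfl fun i _ => ?_
    rw [filter_filter]
    refine sum_congr (by simp only [and_comm]) fun d hd => ?_
    rw [(mem_filter.mp hd).2.2]

open scoped Classical in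
/-- The bijection is `(d, T) ↦ insert d T`. -/
theorem sum_treeWeightSum_mul_eq_sum_unicyclic (w : D → ℝ) (j : Fin n) (P : D → Prop)
    [DecidablePred P] [DecidableEq D]
    (hins : ∀ d T, P d → IsInwardTree tail head (tail d) T →
      IsUnicyclicThrough tail head j (insert d T))
    (hsplit : ∀ F, IsUnicyclicThrough tail head j F →
      ∃! d, d ∈ F ∧ P d ∧ IsInwardTree tail head (tail d) (F.erase d)) :
    ∑ d ∈ univ.filter P, treeWeightSum tail head w (tail d) * w d =
      ∑ F ∈ univ.filter (IsUnicyclicThrough tail head j), ∏ d ∈ F, w d := by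
  simp_rw [treeWeightSum_eq_sum_filter, sum_mul]
  rw [sum_sigma']
  refine sum_bij (fun x _ => insert x.1 x.2) ?_ ?_ ?_ ?_
  · rintro ⟨d, T⟩ hx
    simp only [mem_sigma, mem_filter, mem_univ, true_and] at hx ⊢
    exact hins d T hx.1 hx.2
  · rintro ⟨d, T⟩ hx ⟨d', T'⟩ hx' heq
    simp only [mem_sigma, mem_filter, mem_univ, true_and] at hx hx' heq
    have hdT := hx.2.notMem rfl
    have hdT' := hx'.2.notMem rfl
    obtain rfl : d = d' := (hsplit _ (hins d T hx.1 hx.2)).unique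
      ⟨mem_insert_self d T, hx.1, by rw [erase_insert hdT]; exact hx.2⟩
      ⟨heq ▸ mem_insert_self d' T', hx'.1, by rw [heq, erase_insert hdT']; exact hx'.2⟩
    rw [← erase_insert hdT, heq, erase_insert hdT']
  · intro F hF
    obtain ⟨d, ⟨hd, hP, hT⟩, -⟩ := hsplit F (mem_filter.mp hF).2
    exact ⟨⟨d, F.erase d⟩, by simp [hP, hT], insert_erase hd⟩
  · rintro ⟨d, T⟩ hx
    rw [prod_insert ((mem_filter.mp (mem_sigma.mp hx).2).2.notMem rfl), mul_comm]

open scoped Classical in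
theorem sum_filter_tail_eq_treeWeightSum_mul (w : D → ℝ) (j : Fin n) :
    ∑ d ∈ univ.filter (fun d => tail d = j), treeWeightSum tail head w (tail d) * w d =
      ∑ F ∈ univ.filter (IsUnicyclicThrough tail head j), ∏ d ∈ F, w d := by
  classical
  exact sum_treeWeightSum_mul_eq_sum_unicyclic w j _
    (fun _ _ hdj hT => hT.isUnicyclicThrough_insert (by rw [hdj]))
    fun _ hF => hF.existsUnique_tail_eq

open scoped Classical in
theorem sum_filter_head_eq_treeWeightSum_mul (w : D → ℝ) (j : Fin n) :
    ∑ d ∈ univ.filter (fun d => head d = j), treeWeightSum tail head w (tail d) * w d =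
      ∑ F ∈ univ.filter (IsUnicyclicThrough tail head j), ∏ d ∈ F, w d := by
  classical
  exact sum_treeWeightSum_mul_eq_sum_unicyclic w j _
    (fun d _ hdj hT => hT.isUnicyclicThrough_insert (.single ⟨d, mem_insert_self _ _, rfl, hdj⟩))
    fun _ hF => hF.existsUnique_head_eq

end TreeSums

/-- Weighted directed matrix-tree / Markov chain tree theorem: for a strongly connected
weighted digraph with positive arc weights, the vector of rooted inward spanning-tree
weight sums is a strictly positive left null vector of the directed Laplacian. -/
theorem matrix_tree_left_null_vector {n : ℕ} {D : Type*} [Fintype D]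
    (tail head : D → Fin n) (w : D → ℝ) (hw : ∀ d, 0 < w d)
    (hconn : ∀ x y : Fin n,
      Relation.ReflTransGen (fun a b => ∃ d : D, tail d = a ∧ head d = b) x y) :
    (∀ i, 0 < treeWeightSum tail head w i) ∧
    (∀ j, ∑ i, treeWeightSum tail head w i * lap tail head w i j = 0) := by
  refine ⟨fun i => ?_, fun j => ?_⟩
  · obtain ⟨T, hT⟩ := exists_isInwardTree hconn i
    exact treeWeightSum_pos hw hT
  · rw [sum_mul_lap, sum_filter_tail_eq_treeWeightSum_mul, sum_filter_head_eq_treeWeightSum_mul,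
      sub_self]
end

section
/- If λ assigns weight 2 to a single dart d and weight 1 to every other dart of a torus graph's system, then λ is not realizable: assuming the truncated system (removing the row of u = tail(d) and fixing p_u) coincides with the all-ones Tutte system and is uniquely solvable, solvability of the full system L^λ P = H^λ forces p_v − p_u + τ_d = (0,0), i.e., the edge of d has length zero in the all-ones drawing. -/
open Finset

/-- The right-hand side `H^w` of the toroidal Laplacian system:
`H_i = Σ_{tail d = i} w_d τ_d`. -/
def rhs {n : ℕ} {D : Type*} [Fintype D]
    (tail : D → Fin n) (τ : D → Fin 2 → ℝ) (w : D → ℝ) : Matrix (Fin n) (Fin 2) ℝ :=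
  fun i j => ∑ d ∈ univ.filter (fun d => tail d = i), w d * τ d j

/-!
Write the doubled weight as `1 + δ_{d₀}`. Then `L^λ Q - H^λ` differs from `L¹ Q - H¹` only in the
row of `u = tail d₀`, by `q_u - q_v - τ_{d₀}`. So a solution `Q` of the doubled system solves the
truncated all-ones system, hence is a translate of `P`; translates of `P` solve the whole all-ones
system (the rows of a Laplacian sum to zero), and the row of `u` is left saying
`p_v - p_u + τ_{d₀} = 0`.
-/

section

variable {n : ℕ} {D m : Type*} [Fintype D] (tail head : D → Fin n)

lemma lap_add (w₁ w₂ : D → ℝ) :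
    lap tail head (w₁ + w₂) = lap tail head w₁ + lap tail head w₂ := by
  ext i j
  simp only [lap, Pi.add_apply, Matrix.add_apply, sum_add_distrib]
  split_ifs <;> ring

lemma rhs_add (τ : D → Fin 2 → ℝ) (w₁ w₂ : D → ℝ) :
    rhs tail τ (w₁ + w₂) = rhs tail τ w₁ + rhs tail τ w₂ := by
  ext i j
  simp only [rhs, Pi.add_apply, Matrix.add_apply, add_mul, sum_add_distrib]

lemma lap_mul_apply (w : D → ℝ) (Q : Matrix (Fin n) m ℝ) (i : Fin n) (j : m) :
    (lap tail head w * Q) i j =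
      ∑ d ∈ univ.filter (fun d => tail d = i), w d * (Q i j - Q (head d) j) := by
  have hfiber : ∑ k, ∑ d ∈ univ.filter (fun d => tail d = i ∧ head d = k), w d * Q k j
      = ∑ d ∈ univ.filter (fun d => tail d = i), w d * Q (head d) j := by
    rw [← sum_fiberwise (univ.filter fun d => tail d = i) head]
    refine sum_congr rfl fun k _ => ?_
    rw [filter_filter]
    exact sum_congr rfl fun d hd => by rw [(mem_filter.1 hd).2.2]
  simp only [Matrix.mul_apply, lap, sub_mul, sum_sub_distrib, ite_mul, zero_mul, sum_ite_eq,
    mem_univ, if_true, sum_mul, hfiber, mul_sub]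

lemma lap_mul_add_const (w : D → ℝ) (Q : Matrix (Fin n) m ℝ) (t : m → ℝ) :
    lap tail head w * Matrix.of (fun i j => Q i j + t j) = lap tail head w * Q := by
  ext i j
  simp only [lap_mul_apply, Matrix.of_apply, add_sub_add_right_eq_sub]

variable [DecidableEq D] (d₀ : D)

lemma lap_single_mul_apply (Q : Matrix (Fin n) m ℝ) (i : Fin n) (j : m) :
    (lap tail head (Pi.single d₀ 1) * Q) i j =
      if tail d₀ = i then Q i j - Q (head d₀) j else 0 := by
  simp [lap_mul_apply, Pi.single_apply, ite_mul, sum_ite_eq']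

lemma rhs_single_apply (τ : D → Fin 2 → ℝ) (i : Fin n) (j : Fin 2) :
    rhs tail τ (Pi.single d₀ 1) i j = if tail d₀ = i then τ d₀ j else 0 := by
  simp [rhs, Pi.single_apply, ite_mul, sum_ite_eq']

end

/-- Doubling the weight of a single dart of a torus graph yields a non-realizable weight
vector: if `P` solves the all-ones system, solutions of the truncated all-ones system
(all rows except that of `u = tail d₀`) are unique up to translation, and the edge of `d₀`
has nonzero length in the all-ones drawing, then the system for the weight vector
assigning `2` to `d₀` and `1` to every other dart has no solution. -/
theorem doubled_dart_weight_not_realizable {n : ℕ} {D : Type*} [Fintype D] [DecidableEq D]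
    (tail head : D → Fin n) (τ : D → Fin 2 → ℝ) (d₀ : D)
    (P : Matrix (Fin n) (Fin 2) ℝ)
    (hP : lap tail head (fun _ => (1 : ℝ)) * P = rhs tail τ (fun _ => (1 : ℝ)))
    (huniq : ∀ Q : Matrix (Fin n) (Fin 2) ℝ,
      (∀ i, i ≠ tail d₀ → ∀ j,
        (lap tail head (fun _ => (1 : ℝ)) * Q) i j = rhs tail τ (fun _ => (1 : ℝ)) i j) →
      ∃ t : Fin 2 → ℝ, ∀ i j, Q i j = P i j + t j)
    (hedge : ¬ ∀ j, P (head d₀) j - P (tail d₀) j + τ d₀ j = 0) :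
    ¬ ∃ Q : Matrix (Fin n) (Fin 2) ℝ,
        lap tail head (fun d => if d = d₀ then (2 : ℝ) else 1) * Q
          = rhs tail τ (fun d => if d = d₀ then (2 : ℝ) else 1) := by
  rintro ⟨Q, hQ⟩
  have hw : (fun d => if d = d₀ then (2 : ℝ) else 1) = (fun _ => 1) + Pi.single d₀ 1 := by
    ext d
    rcases eq_or_ne d d₀ with rfl | hd <;> simp [*, one_add_one_eq_two]
  rw [hw, lap_add, rhs_add, Matrix.add_mul] at hQ
  have hrow (i : Fin n) (j : Fin 2) := congrFun₂ hQ i j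
  simp only [Matrix.add_apply, lap_single_mul_apply, rhs_single_apply] at hrow
  obtain ⟨t, ht⟩ := huniq Q fun i hi j => by simpa [Ne.symm hi] using hrow i j
  have hsolves : lap tail head (fun _ => 1) * Q = rhs tail τ (fun _ => 1) := by
    rw [show Q = Matrix.of fun i j => P i j + t j from Matrix.ext ht, lap_mul_add_const, hP]
  refine hedge fun j => ?_
  have hu := hrow (tail d₀) j
  rw [congrFun₂ hsolves, if_pos rfl, if_pos rfl, ht, ht] at hu
  linarith
end
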